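/- arXiv:math/0205024 — 2 statements merged into one kernel-verified Lean document; each statement's English description precedes it below -/
import Mathlib

section
/- In M_{1,1}(E) over an infinite field of characteristic ≠ 2, for any supertraceless matrices w_1, w_2, w_3, w_4 ∈ W one has [w_2, w_1][w_3, w_1][w_4, w_1] = 0; that is, [x_2,x_1][x_3,x_1][x_4,x_1] is a weak polynomial identity for (M_{1,1}(E), W). -/
noncomputable section

/-- The Grassmann algebra `E` over `F` on a countably infinite-dimensional space. -/
abbrev GrAlg (F : Type*) [Field F] := ExteriorAlgebra F (ℕ →₀ F)

/-- The even/odd part `E_i` of the Grassmann algebra. -/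
def Epart (F : Type*) [Field F] (i : ZMod 2) : Submodule F (GrAlg F) :=
  CliffordAlgebra.evenOdd (0 : QuadraticForm F (ℕ →₀ F)) i

/-- The generators `e_n` of the Grassmann algebra. -/
def eGen (F : Type*) [Field F] (n : ℕ) : GrAlg F :=
  ExteriorAlgebra.ι F (Finsupp.single n 1)

/-- Membership in the superalgebra `M_{1,1}(E)`: diagonal entries even,
off-diagonal entries odd. -/
def InM11 {F : Type*} [Field F] (A : Matrix (Fin 2) (Fin 2) (GrAlg F)) : Prop :=
  A 0 0 ∈ Epart F 0 ∧ A 1 1 ∈ Epart F 0 ∧ A 0 1 ∈ Epart F 1 ∧ A 1 0 ∈ Epart F 1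

/-- Membership in the space `W` of supertraceless matrices of `M_{1,1}(E)`. -/
def InW {F : Type*} [Field F] (A : Matrix (Fin 2) (Fin 2) (GrAlg F)) : Prop :=
  InM11 A ∧ A 0 0 = A 1 1

end

section Helpers

variable {F : Type*} [Field F]

local notation "Q" => (0 : QuadraticForm F (ℕ →₀ F))

open CliffordAlgebra

/-- products of two generators are central -/
lemma pair_central (m₁ m₂ : ℕ →₀ F) (y : GrAlg F) :
    (ι Q m₁ * ι Q m₂) * y = y * (ι Q m₁ * ι Q m₂) := by
  induction y using CliffordAlgebra.induction with
  | algebraMap r => rw [← Algebra.commutes]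
  | ι v =>
    rw [mul_assoc, ι_mul_ι_comm_of_isOrtho (QuadraticMap.IsOrtho.all _ _), mul_neg,
      ← mul_assoc, ι_mul_ι_comm_of_isOrtho (QuadraticMap.IsOrtho.all _ _), neg_mul, neg_neg,
      mul_assoc]
  | mul a b ha hb => rw [← mul_assoc, ha, mul_assoc, hb, ← mul_assoc]
  | add a b ha hb => rw [mul_add, ha, hb, add_mul]

/-- even elements are central -/
lemma even_comm {x : GrAlg F} (hx : x ∈ Epart F 0) (y : GrAlg F) : x * y = y * x := by
  induction x, hx using CliffordAlgebra.even_induction with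
  | algebraMap r => rw [← Algebra.commutes]
  | add a b ha hb iha ihb => rw [add_mul, iha, ihb, mul_add]
  | ι_mul_ι_mul m₁ m₂ a ha ih =>
    rw [mul_assoc, ih, ← mul_assoc, pair_central m₁ m₂ y, mul_assoc]

/-- odd elements anticommute -/
lemma odd_anticomm {x y : GrAlg F} (hx : x ∈ Epart F 1) (hy : y ∈ Epart F 1) :
    x * y = -(y * x) := by
  induction x, hx using CliffordAlgebra.odd_induction with
  | ι v =>
    induction y, hy using CliffordAlgebra.odd_induction with
    | ι u => exact ι_mul_ι_comm_of_isOrtho (QuadraticMap.IsOrtho.all _ _)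
    | add a b ha hb iha ihb => rw [mul_add, iha, ihb, add_mul, neg_add]
    | ι_mul_ι_mul m₁ m₂ a ha ih =>
      rw [← mul_assoc, ← pair_central m₁ m₂ (CliffordAlgebra.ι _ v), mul_assoc, ih, mul_neg,
        ← mul_assoc]
  | add a b ha hb iha ihb => rw [add_mul, iha, ihb, mul_add, neg_add]
  | ι_mul_ι_mul m₁ m₂ a ha ih =>
    rw [mul_assoc, ih, mul_neg, ← mul_assoc, pair_central m₁ m₂ y, mul_assoc]

lemma odd_sq (h2 : (2 : F) ≠ 0) {x : GrAlg F} (hx : x ∈ Epart F 1) : x * x = 0 := by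
  have h := odd_anticomm hx hx
  have h' : (2 : F) • (x * x) = 0 := by
    rw [two_smul]
    nth_rewrite 2 [h]
    exact add_neg_cancel _
  exact (smul_eq_zero.mp h').resolve_left h2

lemma keyA (h2 : (2 : F) ≠ 0) {u x y : GrAlg F} (hu : u ∈ Epart F 1)
    (hx : x ∈ Epart F 1) (hy : y ∈ Epart F 1) : (x * u) * (y * u) = 0 := by
  rw [mul_assoc x u (y * u), ← mul_assoc u y u, odd_anticomm hu hy, neg_mul, mul_assoc y u u,
    odd_sq h2 hu, mul_zero, neg_zero, mul_zero]

lemma keyB (h2 : (2 : F) ≠ 0) {u x y : GrAlg F} (hu : u ∈ Epart F 1)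
    (hx : x ∈ Epart F 1) (hy : y ∈ Epart F 1) : (u * x) * (u * y) = 0 := by
  rw [odd_anticomm hu hx, neg_mul, mul_assoc x u (u * y), ← mul_assoc u u y,
    odd_sq h2 hu, zero_mul, mul_zero, neg_zero]

lemma odd_mul_odd {x y : GrAlg F} (hx : x ∈ Epart F 1) (hy : y ∈ Epart F 1) :
    x * y ∈ Epart F 0 := by
  have h := SetLike.mul_mem_graded
    (A := CliffordAlgebra.evenOdd (0 : QuadraticForm F (ℕ →₀ F))) hx hy
  exact (show (1 + 1 : ZMod 2) = 0 from rfl) ▸ h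

/-- the key scalar identity -/
lemma scalar_key (h2 : (2 : F) ≠ 0) {b₁ c₁ b₂ c₂ b₃ c₃ b₄ c₄ : GrAlg F}
    (hb₁ : b₁ ∈ Epart F 1) (hc₁ : c₁ ∈ Epart F 1) (hb₂ : b₂ ∈ Epart F 1)
    (hc₂ : c₂ ∈ Epart F 1) (hb₃ : b₃ ∈ Epart F 1) (hc₃ : c₃ ∈ Epart F 1)
    (hb₄ : b₄ ∈ Epart F 1) (hc₄ : c₄ ∈ Epart F 1) :
    (b₂ * c₁ - b₁ * c₂) * (b₃ * c₁ - b₁ * c₃) * (b₄ * c₁ - b₁ * c₄) = 0 := by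
  have hAA : (b₂ * c₁) * (b₃ * c₁) = 0 := keyA h2 hc₁ hb₂ hb₃
  have hBB : (b₁ * c₂) * (b₁ * c₃) = 0 := keyB h2 hb₁ hc₂ hc₃
  have h23 : (b₂ * c₁ - b₁ * c₂) * (b₃ * c₁ - b₁ * c₃)
      = -((b₁ * c₂) * (b₃ * c₁)) - (b₂ * c₁) * (b₁ * c₃) := by
    rw [mul_sub, sub_mul, sub_mul, hAA, hBB]
    abel
  have hX1 : ((b₁ * c₂) * (b₃ * c₁)) * (b₄ * c₁) = 0 := by
    rw [mul_assoc, keyA h2 hc₁ hb₃ hb₄, mul_zero]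
  have hX2 : ((b₁ * c₂) * (b₃ * c₁)) * (b₁ * c₄) = 0 := by
    rw [mul_assoc, even_comm (odd_mul_odd hb₃ hc₁) (b₁ * c₄), ← mul_assoc,
      keyB h2 hb₁ hc₂ hc₄, zero_mul]
  have hX3 : ((b₂ * c₁) * (b₁ * c₃)) * (b₄ * c₁) = 0 := by
    rw [mul_assoc, even_comm (odd_mul_odd hb₁ hc₃) (b₄ * c₁), ← mul_assoc,
      keyA h2 hc₁ hb₂ hb₄, zero_mul]
  have hX4 : ((b₂ * c₁) * (b₁ * c₃)) * (b₁ * c₄) = 0 := by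
    rw [mul_assoc, keyB h2 hb₁ hc₃ hc₄, mul_zero]
  rw [h23, sub_mul, neg_mul, mul_sub, mul_sub, hX1, hX2, hX3, hX4]
  abel

end Helpers

/-- `[x₂, x₁][x₃, x₁][x₄, x₁]` is a weak polynomial identity for
`(M_{1,1}(E), W)`. -/
theorem weak_identity_p (F : Type*) [Field F] [Infinite F] (h2 : (2 : F) ≠ 0)
    (w₁ w₂ w₃ w₄ : Matrix (Fin 2) (Fin 2) (GrAlg F))
    (h₁ : InW w₁) (h₂ : InW w₂) (h₃ : InW w₃) (h₄ : InW w₄) :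
    (w₂ * w₁ - w₁ * w₂) * (w₃ * w₁ - w₁ * w₃) * (w₄ * w₁ - w₁ * w₄) = 0 := by
  obtain ⟨⟨he₁, _, hb₁, hc₁⟩, hd₁⟩ := h₁
  have hK : ∀ w : Matrix (Fin 2) (Fin 2) (GrAlg F), InW w →
      w * w₁ - w₁ * w = Matrix.diagonal (fun _ => w 0 1 * w₁ 1 0 - w₁ 0 1 * w 1 0) := by
    rintro w ⟨⟨he, _, hb, hc⟩, hd⟩
    ext i j
    fin_cases i <;> fin_cases j <;>
      simp only [Matrix.sub_apply, Matrix.mul_apply, Fin.sum_univ_two, Matrix.diagonal,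
        Matrix.of_apply, Fin.zero_eta, Fin.mk_one, ne_eq, zero_ne_one, one_ne_zero,
        if_true, if_false, ite_true, ite_false, reduceIte]
    · rw [even_comm he (w₁ 0 0)]
      abel
    · rw [← hd₁, ← hd, even_comm he (w₁ 0 1), even_comm he₁ (w 0 1)]
      abel
    · rw [← hd₁, ← hd, even_comm he (w₁ 1 0), even_comm he₁ (w 1 0)]
      abel
    · rw [← hd₁, ← hd, even_comm he (w₁ 0 0), odd_anticomm hc hb₁, odd_anticomm hc₁ hb]
      abel
  rw [hK w₂ h₂, hK w₃ h₃, hK w₄ h₄, Matrix.diagonal_mul_diagonal, Matrix.diagonal_mul_diagonal]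
  obtain ⟨⟨_, _, hb₂, hc₂⟩, _⟩ := h₂
  obtain ⟨⟨_, _, hb₃, hc₃⟩, _⟩ := h₃
  obtain ⟨⟨_, _, hb₄, hc₄⟩, _⟩ := h₄
  have hz : (w₂ 0 1 * w₁ 1 0 - w₁ 0 1 * w₂ 1 0) * (w₃ 0 1 * w₁ 1 0 - w₁ 0 1 * w₃ 1 0) *
      (w₄ 0 1 * w₁ 1 0 - w₁ 0 1 * w₄ 1 0) = 0 :=
    scalar_key h2 hb₁ hc₁ hb₂ hc₂ hb₃ hc₃ hb₄ hc₄
  simp only [hz, Matrix.diagonal_zero]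
end

section
/- Every normal c-array of content (1,...,1,2) (l ones followed by one 2, so value l+1 occurs twice and values 1,...,l occur once) has its last two columns equal to (l+1, 1) and (l+1, y) for some y, and deleting the column (l+1, 1) gives a bijection with normal c-arrays of content (0, 1, ..., 1) on the values {2, ..., l+1}. In particular the number of normal c-arrays of content (1,...,1,2) equals the number of multilinear normal c-arrays on l values. -/
/-- Tableaux are represented as lists of rows of positive integers.
`IsSSYT T` : rows weakly increasing, columns strictly increasing,
row lengths weakly decreasing, no empty rows (English notation). -/
def IsSSYT (T : List (List ℕ)) : Prop :=
  (∀ r ∈ T, List.Pairwise (· ≤ ·) r) ∧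
  (∀ (i j a b : ℕ), (T.getD i [])[j]? = some a → (T.getD (i+1) [])[j]? = some b → a < b) ∧
  (∀ i, (T.getD (i+1) []).length ≤ (T.getD i []).length) ∧
  [] ∉ T

/-- Schensted row insertion.  Returns the new tableau together with the
(0-based) index of the row in which a new box was added. -/
def rinsert : List (List ℕ) → ℕ → List (List ℕ) × ℕ
  | [], x => ([[x]], 0)
  | r :: rs, x =>
    match r.findIdx? (fun t => x < t) with
    | none => ((r ++ [x]) :: rs, 0)
    | some j =>
      let y := r.getD j 0
      let p := rinsert rs y
      ((r.set j x) :: p.1, p.2 + 1)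

/-- Reverse bumping through the rows above (given in reversed order). -/
def revBump : List (List ℕ) → ℕ → List (List ℕ) × ℕ
  | [], x => ([], x)
  | r :: rs, x =>
    let k := (r.takeWhile (· < x)).length
    if k = 0 then (r :: rs, x)
    else
      let y := r.getD (k - 1) 0
      let p := revBump rs y
      ((r.set (k - 1) x) :: p.1, p.2)

/-- Schensted deletion: remove the last box of row `i` and reverse-bump,
returning the new tableau and the ejected entry. -/
def schDelete (T : List (List ℕ)) (i : ℕ) : List (List ℕ) × ℕ :=
  let r := T.getD i []
  let x := r.getLastD 0
  let r' := r.dropLast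
  let p := revBump (T.take i).reverse x
  (p.1.reverse ++ (if r' = [] then ([] : List (List ℕ)) else [r']) ++ T.drop (i + 1), p.2)

/-- One step of `Carray2Dtableau`: insert `b` and append `a` at the end of
the next row. -/
def c2dStep (T : List (List ℕ)) (p : ℕ × ℕ) : List (List ℕ) :=
  let q := rinsert T p.2
  if q.2 + 1 < q.1.length then q.1.set (q.2 + 1) ((q.1.getD (q.2 + 1) []) ++ [p.1])
  else q.1 ++ [[p.1]]

/-- The map `Carray2Dtableau` from c-arrays (lists of columns `(aᵢ, bᵢ)`) to
tableaux of double shape. -/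
def c2d (S : List (ℕ × ℕ)) : List (List ℕ) := S.foldl c2dStep []

/-- One step of `Dtableau2Carray`: extract the maximal entry `x` (occurrence of
maximal column, at the end of row `i`), apply `schDelete` at row `i` ejecting `y`,
and remove the corresponding entry of row `i-1`. -/
def d2cStep (T : List (List ℕ)) : List (List ℕ) × (ℕ × ℕ) :=
  let x := T.flatten.foldr max 0
  let cand := (List.range T.length).filter (fun i => (T.getD i []).getLastD 0 = x)
  let i := cand.foldl (fun acc i =>
      if (T.getD acc []).length < (T.getD i []).length then i else acc) 0
  let j := (T.getD i []).length - 1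
  let p := schDelete T i
  let T2 := p.1.set (i - 1) ((p.1.getD (i - 1) []).eraseIdx j)
  (T2.filter (fun r => r ≠ []), (x, p.2))

def d2cAux : ℕ → List (List ℕ) → List (ℕ × ℕ)
  | 0, _ => []
  | n + 1, T =>
    if T = [] then []
    else
      let p := d2cStep T
      d2cAux n p.1 ++ [p.2]

/-- The map `Dtableau2Carray`. -/
def d2c (T : List (List ℕ)) : List (ℕ × ℕ) := d2cAux T.flatten.length T

/-- Content of a two-rowed array: multiplicity of each value among all entries. -/
def cntA (S : List (ℕ × ℕ)) (v : ℕ) : ℕ := (S.map Prod.fst ++ S.map Prod.snd).count v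

/-- Content of a tableau. -/
def cntT (T : List (List ℕ)) (v : ℕ) : ℕ := T.flatten.count v

/-- A c-array: each column `(aᵢ, bᵢ)` satisfies `bᵢ < aᵢ` and the columns are
weakly increasing in the lexicographic order. -/
def IsCArray (S : List (ℕ × ℕ)) : Prop :=
  (∀ p ∈ S, p.2 < p.1) ∧
  List.Chain' (fun p q : ℕ × ℕ => p.1 < q.1 ∨ (p.1 = q.1 ∧ p.2 ≤ q.2)) S

/-- Normality: every value occurs at most twice, and the bottom row contains no
weakly increasing subsequence of length 3. -/
def IsNormal (S : List (ℕ × ℕ)) : Prop :=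
  (∀ v, cntA S v ≤ 2) ∧
  ∀ t : List ℕ, t.Sublist (S.map Prod.snd) → t.Pairwise (· ≤ ·) → t.length ≤ 2

/-- A double shape: each row length is repeated an even number of times. -/
def IsDoubleShape (T : List (List ℕ)) : Prop :=
  ∃ L : List ℕ, T.map List.length = L.flatMap (fun a => [a, a])

/-- Content `(1, …, 1, 2)`: the values `1, …, l` occur once and `l+1` twice. -/
def contentL2 (l v : ℕ) : ℕ :=
  if 1 ≤ v ∧ v ≤ l then 1 else if v = l + 1 then 2 else 0


/-! Bottom entries are smaller than top entries, so in content `(1, …, 1, 2)` the value `l + 1`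
occurs only in the weakly increasing top row: the array ends with columns `(l + 1, b), (l + 1, y)`,
`b ≤ y`. The single `1` is a bottom entry; in an earlier column it would start the weakly
increasing triple `1, b, y`, so `b = 1`. Conversely, inserting `(l + 1, 1)` before the last column
of a normal c-array with entries `≥ 2` keeps it normal, since no earlier bottom entry can precede
the new `1` in a weakly increasing subsequence. Finally, subtracting one from every entry turns
content `(0, 1, …, 1)` into `(1, …, 1)`. -/

open List

def NormalCArrays (c : ℕ → ℕ) : Set (List (ℕ × ℕ)) :=
  {S | IsCArray S ∧ IsNormal S ∧ ∀ v, cntA S v = c v}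

-- Lets instance search see that the column order in `IsCArray` is transitive.
abbrev ColumnLE (p q : ℕ × ℕ) : Prop := p.1 < q.1 ∨ (p.1 = q.1 ∧ p.2 ≤ q.2)

instance : IsTrans (ℕ × ℕ) ColumnLE := ⟨fun _ _ _ => by omega⟩

lemma cntA_append (A B : List (ℕ × ℕ)) (v : ℕ) :
    cntA (A ++ B) v = cntA A v + cntA B v := by
  simp only [cntA, map_append, count_append]; omega

lemma cntA_singleton (a b v : ℕ) :
    cntA [(a, b)] v = (if a = v then 1 else 0) + (if b = v then 1 else 0) := by
  simp [cntA, count_cons, add_comm]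

lemma cntA_pos_iff {S : List (ℕ × ℕ)} {v : ℕ} : 0 < cntA S v ↔ ∃ p ∈ S, p.1 = v ∨ p.2 = v := by
  simp only [cntA, count_pos_iff, mem_append, mem_map]
  grind

lemma cntA_eq_count_fst {S : List (ℕ × ℕ)} {v : ℕ} (h : v ∉ S.map Prod.snd) :
    cntA S v = (S.map Prod.fst).count v := by
  simp [cntA, count_append, count_eq_zero_of_not_mem h]

lemma IsCArray.sublist {S S' : List (ℕ × ℕ)} (hS : IsCArray S) (h : S' <+ S) : IsCArray S' :=
  ⟨fun p hp => hS.1 p (h.subset hp), hS.2.sublist h⟩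

lemma IsNormal.sublist {S S' : List (ℕ × ℕ)} (hS : IsNormal S) (h : S' <+ S) : IsNormal S' :=
  ⟨fun v => ((h.map _).append (h.map _) |>.count_le v).trans (hS.1 v),
    fun t ht => hS.2 t (ht.trans (h.map _))⟩

lemma IsCArray.pairwise_fst {S : List (ℕ × ℕ)} (hS : IsCArray S) :
    (S.map Prod.fst).Pairwise (· ≤ ·) :=
  pairwise_map.2 ((isChain_iff_pairwise.1 hS.2).imp fun h => by omega)

lemma List.Pairwise.eq_append_replicate_count {α : Type*} [PartialOrder α] [DecidableEq α]
    {t : List α} {x : α} (hs : t.Pairwise (· ≤ ·)) (hx : ∀ a ∈ t, a ≤ x) :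
    ∃ t₀, t = t₀ ++ replicate (t.count x) x ∧ x ∉ t₀ := by
  induction t with
  | nil => exact ⟨[], rfl, not_mem_nil⟩
  | cons a r ih =>
    obtain ⟨har, hr⟩ := pairwise_cons.1 hs
    by_cases hax : a = x
    · subst hax
      have hr_eq : r = replicate r.length a :=
        eq_replicate_of_mem fun b hb => le_antisymm (hx b (mem_cons_of_mem _ hb)) (har b hb)
      refine ⟨[], ?_, not_mem_nil⟩
      rw [count_cons_self, hr_eq, count_replicate_self]
      rfl
    · obtain ⟨t₀, ht, hx₀⟩ := ih hr fun b hb => hx b (mem_cons_of_mem _ hb)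
      refine ⟨a :: t₀, ?_, by simp [hx₀, Ne.symm hax]⟩
      rw [count_cons_of_ne hax, cons_append, ← ht]

lemma IsCArray.exists_eq_append_of_fst_le {S : List (ℕ × ℕ)} {M : ℕ} (hS : IsCArray S)
    (hM : ∀ p ∈ S, p.1 ≤ M) :
    ∃ S₀ S₁, S = S₀ ++ S₁ ∧ M ∉ S₀.map Prod.fst ∧ S₁.map Prod.fst = replicate (cntA S M) M := by
  have hbot : M ∉ S.map Prod.snd := by
    simp only [mem_map, not_exists, not_and]
    intro p hp h
    have := hS.1 p hp
    have := hM p hp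
    omega
  obtain ⟨t₀, ht, hM₀⟩ := hS.pairwise_fst.eq_append_replicate_count (x := M) (by simpa using hM)
  rw [cntA_eq_count_fst hbot]
  obtain ⟨S₀, S₁, hS₀₁, rfl, h₁⟩ := map_eq_append_iff.1 ht
  exact ⟨S₀, S₁, hS₀₁, hM₀, h₁⟩

lemma IsCArray.insert_before_last {A : List (ℕ × ℕ)} {a b y : ℕ} (hS : IsCArray (A ++ [(a, y)]))
    (hA : a ∉ A.map Prod.fst) (hb : b < a) (hby : b ≤ y) : IsCArray (A ++ [(a, b), (a, y)]) := by
  refine ⟨fun p hp => ?_, ?_⟩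
  · rcases mem_append.1 hp with hp | hp
    · exact hS.1 p (mem_append_left _ hp)
    · rcases mem_pair.1 hp with rfl | rfl
      exacts [hb, hS.1 _ (by simp)]
  · obtain ⟨hchain, -, hlast⟩ := isChain_append.1 hS.2
    refine isChain_append.2 ⟨hchain, by simp [hby], fun p hp q hq => ?_⟩
    have hpA : p.1 ≠ a := fun h => hA (mem_map.2 ⟨p, mem_of_mem_getLast? hp, h⟩)
    have := hlast p hp _ rfl
    simp only [head?_cons, Option.mem_some_iff] at hq
    subst hq
    omega

lemma IsNormal.insert_before_last {A : List (ℕ × ℕ)} {a b c y : ℕ}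
    (hS : IsNormal (A ++ [(c, y)])) (hA : ∀ p ∈ A, b < p.2)
    (hcnt : ∀ v, cntA (A ++ [(a, b), (c, y)]) v ≤ 2) : IsNormal (A ++ [(a, b), (c, y)]) := by
  refine ⟨hcnt, fun t ht hsort => ?_⟩
  simp only [map_append, map_cons, map_nil] at ht
  obtain ⟨t₁, t₂, rfl, h₁, h₂⟩ := sublist_append_iff.1 ht
  rcases sublist_cons_iff.1 h₂ with h₂ | ⟨r, rfl, hr⟩
  · exact hS.2 _ (by simpa using h₁.append h₂) hsort
  · have ht₁ : t₁ = [] := eq_nil_iff_forall_not_mem.2 fun x hx => by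
      obtain ⟨p, hp, rfl⟩ := mem_map.1 (h₁.subset hx)
      have := (pairwise_append.1 hsort).2.2 _ hx b mem_cons_self
      have := hA p hp
      omega
    subst ht₁
    simpa using hr.length_le

def relabel (f : ℕ → ℕ) (S : List (ℕ × ℕ)) : List (ℕ × ℕ) := S.map (Prod.map f f)

section relabel

variable {f : ℕ → ℕ} {S : List (ℕ × ℕ)}

lemma map_snd_relabel : (relabel f S).map Prod.snd = (S.map Prod.snd).map f := by
  simp [relabel, Function.comp_def]

lemma cntA_relabel_apply (hf : f.Injective) (v : ℕ) : cntA (relabel f S) (f v) = cntA S v := by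
  have : (relabel f S).map Prod.fst ++ (relabel f S).map Prod.snd =
      (S.map Prod.fst ++ S.map Prod.snd).map f := by
    simp [relabel, Function.comp_def]
  rw [cntA, this, count_map_of_injective _ _ hf, cntA]

lemma cntA_relabel_of_notMem_range {v : ℕ} (hv : v ∉ Set.range f) : cntA (relabel f S) v = 0 := by
  refine count_eq_zero.2 fun h => hv ?_
  simp only [relabel, map_map, mem_append, mem_map, Function.comp_apply, Prod.map_fst,
    Prod.map_snd] at h
  obtain ⟨p, -, rfl⟩ | ⟨p, -, rfl⟩ := h <;> exact ⟨_, rfl⟩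

lemma isCArray_relabel_iff (hf : StrictMono f) : IsCArray (relabel f S) ↔ IsCArray S := by
  refine and_congr ?_ ((isChain_map _).trans ?_)
  · simp only [relabel, forall_mem_map, Prod.map_fst, Prod.map_snd, hf.lt_iff_lt]
  · simp only [Prod.map_fst, Prod.map_snd, hf.lt_iff_lt, hf.le_iff_le, hf.injective.eq_iff]
    rfl

lemma isNormal_relabel_iff (hf : StrictMono f) : IsNormal (relabel f S) ↔ IsNormal S := by
  refine and_congr ⟨fun h v => cntA_relabel_apply hf.injective v ▸ h (f v), fun h v => ?_⟩ ?_
  · by_cases hv : v ∈ Set.range f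
    · obtain ⟨w, rfl⟩ := hv
      exact cntA_relabel_apply hf.injective w ▸ h w
    · simp [cntA_relabel_of_notMem_range hv]
  · rw [map_snd_relabel]
    refine ⟨fun h s hs hsort => ?_, fun h t ht hsort => ?_⟩
    · simpa using h _ (hs.map f) (pairwise_map.2 (hsort.imp hf.monotone.imp))
    · obtain ⟨s, hs, rfl⟩ := sublist_map_iff.1 ht
      simpa using h s hs ((pairwise_map.1 hsort).imp hf.le_iff_le.1)

end relabel

lemma relabel_mem_normalCArrays_iff {f : ℕ → ℕ} {S : List (ℕ × ℕ)} {c : ℕ → ℕ}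
    (hf : StrictMono f) (hc : ∀ v ∉ Set.range f, c v = 0) :
    relabel f S ∈ NormalCArrays c ↔ S ∈ NormalCArrays (c ∘ f) := by
  refine and_congr (isCArray_relabel_iff hf)
    (and_congr (isNormal_relabel_iff hf) ⟨fun h v => ?_, fun h v => ?_⟩)
  · rw [← cntA_relabel_apply hf.injective, h, Function.comp_apply]
  · by_cases hv : v ∈ Set.range f
    · obtain ⟨w, rfl⟩ := hv
      rw [cntA_relabel_apply hf.injective, h, Function.comp_apply]
    · rw [cntA_relabel_of_notMem_range hv, hc v hv]

lemma relabel_succ_relabel_pred {T : List (ℕ × ℕ)} (h : cntA T 0 = 0) :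
    relabel (· + 1) (relabel (· - 1) T) = T := by
  rw [relabel, relabel, map_map]
  refine (map_congr_left fun p hp => ?_).trans (map_id T)
  have : ¬ (p.1 = 0 ∨ p.2 = 0) := fun h0 => (cntA_pos_iff.2 ⟨p, hp, h0⟩).ne' h
  ext <;> simp <;> omega

lemma bijOn_relabel_succ {c : ℕ → ℕ} (h0 : c 0 = 0) :
    Set.BijOn (relabel (· + 1)) (NormalCArrays (c ∘ (· + 1))) (NormalCArrays c) := by
  have hsucc : StrictMono (· + 1 : ℕ → ℕ) := fun _ _ => Nat.succ_lt_succ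
  have hc : ∀ v ∉ Set.range (· + 1 : ℕ → ℕ), c v = 0 := fun v hv => by
    obtain rfl : v = 0 := by by_contra h; exact hv ⟨v - 1, by simp; omega⟩
    exact h0
  refine ⟨fun S hS => (relabel_mem_normalCArrays_iff hsucc hc).2 hS,
    (map_injective_iff.2 (Prod.map_injective.2 ⟨hsucc.injective, hsucc.injective⟩)).injOn,
    fun T hT => ?_⟩
  have hT0 : cntA T 0 = 0 := (hT.2.2 0).trans h0
  refine ⟨relabel (· - 1) T, ?_, relabel_succ_relabel_pred hT0⟩
  rwa [← relabel_mem_normalCArrays_iff hsucc hc, relabel_succ_relabel_pred hT0]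

lemma cntA_append_pair (A : List (ℕ × ℕ)) (p q : ℕ × ℕ) (v : ℕ) :
    cntA (A ++ [p, q]) v = cntA (A ++ [q]) v + cntA [p] v := by
  rw [show A ++ [p, q] = A ++ [p] ++ [q] by simp, cntA_append, cntA_append, cntA_append]
  omega

lemma eraseIdx_append_pair (A : List (ℕ × ℕ)) (p q : ℕ × ℕ) :
    (A ++ [p, q]).eraseIdx ((A ++ [p, q]).length - 2) = A ++ [q] := by
  rw [show (A ++ [p, q]).length - 2 = A.length by simp, eraseIdx_append_of_length_le le_rfl]
  simp

lemma pos_content_of_mem {S : List (ℕ × ℕ)} {c : ℕ → ℕ} (hc : ∀ v, cntA S v = c v) {p : ℕ × ℕ}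
    (hp : p ∈ S) : 0 < c p.1 ∧ 0 < c p.2 :=
  ⟨hc p.1 ▸ cntA_pos_iff.2 ⟨p, hp, .inl rfl⟩, hc p.2 ▸ cntA_pos_iff.2 ⟨p, hp, .inr rfl⟩⟩

section contentOnesTwo

variable {l : ℕ}

lemma contentL2_eq (hl : 1 ≤ l) (v : ℕ) :
    contentL2 l v = (if 2 ≤ v ∧ v ≤ l + 1 then 1 else 0) + cntA [(l + 1, 1)] v := by
  rw [cntA_singleton, contentL2]
  split_ifs <;> omega

lemma eq_append_of_mem_normalCArrays_contentL2 (hl : 1 ≤ l) {S : List (ℕ × ℕ)}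
    (hS : S ∈ NormalCArrays (contentL2 l)) : ∃ y S₀, S = S₀ ++ [(l + 1, 1), (l + 1, y)] := by
  obtain ⟨hCA, hN, hc⟩ := hS
  have hbound : ∀ p ∈ S, 1 ≤ p.2 ∧ p.1 ≤ l + 1 := fun p hp => by
    have := pos_content_of_mem hc hp
    simp only [contentL2] at this
    split_ifs at this <;> omega
  obtain ⟨S₀, S₁, rfl, -, h₁⟩ := hCA.exists_eq_append_of_fst_le fun p hp => (hbound p hp).2
  rw [hc, show contentL2 l (l + 1) = 2 by simp [contentL2]] at h₁
  obtain ⟨p, q, rfl⟩ := length_eq_two.1 (by simpa using congrArg length h₁)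
  simp only [map_cons, map_nil, replicate_succ, replicate_zero, cons.injEq, and_true] at h₁
  have hpq : p.2 ≤ q.2 := by
    have := (isChain_cons_cons.1 (isChain_append.1 hCA.2).2.1).1
    omega
  obtain ⟨r, hr, hr1⟩ : ∃ r ∈ S₀ ++ [p, q], r.2 = 1 := by
    obtain ⟨r, hr, h⟩ := cntA_pos_iff.1 (show 0 < cntA _ 1 by rw [hc]; simp [contentL2, hl])
    have := hCA.1 r hr
    have := hbound r hr
    exact ⟨r, hr, by omega⟩
  have hr : r = p ∨ r = q := by
    rcases mem_append.1 hr with hr | hr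
    · have hsub : [r.2, p.2, q.2] <+ (S₀ ++ [p, q]).map Prod.snd := by
        simpa using (singleton_sublist.2 (mem_map_of_mem (f := Prod.snd) hr)).append
          (Sublist.refl [p.2, q.2])
      have := hN.2 _ hsub (by simp [hpq, hr1, (hbound p (by simp)).1, (hbound q (by simp)).1])
      simp at this
    · simpa using hr
  have hp : p = (l + 1, 1) := Prod.ext h₁.1 (by have := (hbound p (by simp)).1; grind)
  exact ⟨q.2, S₀, by rw [hp, ← h₁.2]⟩

lemma eq_append_of_mem_normalCArrays_ones (hl : 1 ≤ l) {T : List (ℕ × ℕ)}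
    (hT : T ∈ NormalCArrays fun v => if 2 ≤ v ∧ v ≤ l + 1 then 1 else 0) :
    ∃ y T₀, T = T₀ ++ [(l + 1, y)] ∧ l + 1 ∉ T₀.map Prod.fst := by
  obtain ⟨hCA, -, hc⟩ := hT
  obtain ⟨T₀, T₁, rfl, hT₀, h₁⟩ := hCA.exists_eq_append_of_fst_le (M := l + 1) fun p hp => by
    have := (pos_content_of_mem hc hp).1
    split_ifs at this <;> omega
  have hM : cntA (T₀ ++ T₁) (l + 1) = 1 := by
    rw [hc]
    exact if_pos ⟨by omega, le_rfl⟩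
  rw [hM] at h₁
  obtain ⟨q, rfl⟩ := length_eq_one_iff.1 (by simpa using congrArg length h₁)
  simp only [map_cons, map_nil, replicate_one, cons.injEq, and_true] at h₁
  exact ⟨q.2, T₀, by rw [← h₁], hT₀⟩

lemma bijOn_eraseIdx_penultimate (hl : 1 ≤ l) :
    Set.BijOn (fun S : List (ℕ × ℕ) => S.eraseIdx (S.length - 2)) (NormalCArrays (contentL2 l))
      (NormalCArrays fun v => if 2 ≤ v ∧ v ≤ l + 1 then 1 else 0) := by
  refine ⟨fun S hS => ?_, fun S hS S' hS' h => ?_, fun T hT => ?_⟩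
  · obtain ⟨y, S₀, rfl⟩ := eq_append_of_mem_normalCArrays_contentL2 hl hS
    have hsub : S₀ ++ [(l + 1, y)] <+ S₀ ++ [(l + 1, 1), (l + 1, y)] :=
      (Sublist.refl S₀).append ((Sublist.refl _).cons _)
    simp only [eraseIdx_append_pair]
    refine ⟨hS.1.sublist hsub, hS.2.1.sublist hsub, fun v => ?_⟩
    have := hS.2.2 v
    rw [cntA_append_pair, contentL2_eq hl] at this
    dsimp only
    omega
  · obtain ⟨y, S₀, rfl⟩ := eq_append_of_mem_normalCArrays_contentL2 hl hS
    obtain ⟨y', S₀', rfl⟩ := eq_append_of_mem_normalCArrays_contentL2 hl hS'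
    simp only [eraseIdx_append_pair] at h
    obtain ⟨rfl, h⟩ := append_inj' h rfl
    obtain rfl : y = y' := by simpa using h
    rfl
  · obtain ⟨y, T₀, rfl, hT₀⟩ := eq_append_of_mem_normalCArrays_ones hl hT
    obtain ⟨hCA, hN, hc⟩ := hT
    have hcnt : ∀ v, cntA (T₀ ++ [(l + 1, 1), (l + 1, y)]) v = contentL2 l v := fun v => by
      rw [cntA_append_pair, contentL2_eq hl, hc]
    have hy : 2 ≤ y := by
      have := (pos_content_of_mem hc (p := (l + 1, y)) (by simp)).2
      split_ifs at this <;> omega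
    have hbot : ∀ p ∈ T₀, 1 < p.2 := fun p hp => by
      have := (pos_content_of_mem hc (mem_append_left _ hp)).2
      split_ifs at this <;> omega
    refine ⟨_, ⟨hCA.insert_before_last hT₀ (by omega) (by omega),
      hN.insert_before_last hbot fun v => ?_, hcnt⟩, eraseIdx_append_pair _ _ _⟩
    rw [hcnt, contentL2]
    split_ifs <;> omega

end contentOnesTwo

/-- every normal c-array of content `(1,…,1,2)` ends with columns
`(l+1, 1), (l+1, y)`; removing the column `(l+1, 1)` gives a bijection with the
normal c-arrays of content `(0, 1, …, 1)` on `{2, …, l+1}`, and the count equals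
the number of multilinear normal c-arrays on `l` values. -/
theorem normal_carray_content_ones_two (l : ℕ) (hl : 1 ≤ l) :
    (∀ S : List (ℕ × ℕ),
      IsCArray S ∧ IsNormal S ∧ (∀ v, cntA S v = contentL2 l v) →
      ∃ y : ℕ, ∃ S₀ : List (ℕ × ℕ), S = S₀ ++ [(l + 1, 1), (l + 1, y)]) ∧
    Set.BijOn (fun S : List (ℕ × ℕ) => S.eraseIdx (S.length - 2))
      {S | IsCArray S ∧ IsNormal S ∧ (∀ v, cntA S v = contentL2 l v)}
      {S | IsCArray S ∧ IsNormal S ∧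
        (∀ v, cntA S v = if 2 ≤ v ∧ v ≤ l + 1 then 1 else 0)} ∧
    Nat.card {S : List (ℕ × ℕ) // IsCArray S ∧ IsNormal S ∧
        (∀ v, cntA S v = contentL2 l v)} =
    Nat.card {S : List (ℕ × ℕ) // IsCArray S ∧ IsNormal S ∧
        (∀ v, cntA S v = if 1 ≤ v ∧ v ≤ l then 1 else 0)} := by
  have hshift : (fun v => if 2 ≤ v ∧ v ≤ l + 1 then 1 else 0) ∘ (· + 1) =
      fun v => if 1 ≤ v ∧ v ≤ l then 1 else 0 := by
    ext v
    simp
  have herase := bijOn_eraseIdx_penultimate hl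
  have hrelabel := bijOn_relabel_succ (c := fun v => if 2 ≤ v ∧ v ≤ l + 1 then 1 else 0) rfl
  rw [hshift] at hrelabel
  exact ⟨fun S hS => eq_append_of_mem_normalCArrays_contentL2 hl hS, herase,
    Nat.card_congr (herase.equiv.trans hrelabel.equiv.symm)⟩
end
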